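/- The matrix group generated by the 2×2 Pauli matrices σ_x and σ_y is isomorphic to the group ⟨P₀, P₁, J | P₀², P₁², J², [J,P₀], [J,P₁], J(P₀P₁)²⟩, which is the dihedral group of order 8. -/

import Mathlib

open Matrix Complex

noncomputable def sigmaX : Matrix (Fin 2) (Fin 2) ℂ := !![0, 1; 1, 0]
noncomputable def sigmaY : Matrix (Fin 2) (Fin 2) ℂ := !![0, -Complex.I; Complex.I, 0]

/-- Relations for `G₂ = ⟨P₀, P₁, J | P₀², P₁², J², [J,P₀], [J,P₁], J(P₀P₁)²⟩`,
with generators `0 ↦ P₀`, `1 ↦ P₁`, `2 ↦ J`. -/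
def g2Rels : Set (FreeGroup (Fin 3)) :=
  {w | w = (FreeGroup.of 0) ^ 2 ∨ w = (FreeGroup.of 1) ^ 2 ∨ w = (FreeGroup.of 2) ^ 2 ∨
    w = (FreeGroup.of 2) * (FreeGroup.of 0) * (FreeGroup.of 2)⁻¹ * (FreeGroup.of 0)⁻¹ ∨
    w = (FreeGroup.of 2) * (FreeGroup.of 1) * (FreeGroup.of 2)⁻¹ * (FreeGroup.of 1)⁻¹ ∨
    w = (FreeGroup.of 2) * ((FreeGroup.of 0) * (FreeGroup.of 1)) ^ 2}

/-!
The Coxeter presentation `⟨s, t | s², t², (st)⁴⟩` of `DihedralGroup 4` gives maps out of it as soon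
as two involutions with `(st)⁴ = 1` are found. In `G₂` the relations `J²` and `J(P₀P₁)²` give
`J = (P₀P₁)²`, so `P₀, P₁, J ↦ sr 0, sr 1, r 2` is inverse to the Coxeter map `sr 0, sr 1 ↦ P₀, P₁`.
On the matrix side `σ_x, σ_y` are involutions with `(σ_x σ_y)² = -1`, so they define a
representation of `DihedralGroup 4` whose image is the monoid they generate; it is faithful since
it does not kill the central element `r 2`.
-/

namespace DihedralGroup

variable {n : ℕ} {G : Type*} [Group G]

theorem closure_sr_zero_sr_one :
    Subgroup.closure {sr 0, sr 1} = (⊤ : Subgroup (DihedralGroup n)) := by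
  have h0 : sr 0 ∈ Subgroup.closure {sr 0, sr (1 : ZMod n)} :=
    Subgroup.subset_closure (Set.mem_insert _ _)
  have hr : r 1 ∈ Subgroup.closure {sr 0, sr (1 : ZMod n)} := by
    have := mul_mem h0 (Subgroup.subset_closure (Set.mem_insert_of_mem _ rfl))
    rwa [sr_mul_sr, sub_zero] at this
  have hrk (k : ℤ) : r (k : ZMod n) ∈ Subgroup.closure {sr 0, sr (1 : ZMod n)} := by
    rw [← r_one_zpow]
    exact zpow_mem hr k
  rw [eq_top_iff]
  rintro (i | i) -
  · obtain ⟨k, rfl⟩ := ZMod.intCast_surjective i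
    exact hrk k
  · obtain ⟨k, rfl⟩ := ZMod.intCast_surjective i
    have := mul_mem h0 (hrk k)
    rwa [sr_mul_r, zero_add] at this

/-- Reflections are involutions, so the two reflections also generate `DihedralGroup n` as a
monoid. -/
theorem mclosure_sr_zero_sr_one :
    Submonoid.closure {sr 0, sr 1} = (⊤ : Submonoid (DihedralGroup n)) := by
  have hinv : ({sr 0, sr 1} : Set (DihedralGroup n))⁻¹ = {sr 0, sr 1} := by
    simp [Set.inv_insert, inv_sr]
  calc Submonoid.closure {sr 0, sr 1}
      = Submonoid.closure ({sr 0, sr 1} ∪ ({sr 0, sr 1} : Set (DihedralGroup n))⁻¹) := by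
        rw [hinv, Set.union_self]
    _ = (Subgroup.closure {sr 0, sr 1}).toSubmonoid := (Subgroup.closure_toSubmonoid _).symm
    _ = ⊤ := by rw [closure_sr_zero_sr_one, Subgroup.top_toSubmonoid]

theorem hom_ext {M : Type*} [Monoid M] {f g : DihedralGroup n →* M}
    (h0 : f (sr 0) = g (sr 0)) (h1 : f (sr 1) = g (sr 1)) : f = g :=
  MonoidHom.eq_of_eqOn_denseM mclosure_sr_zero_sr_one <| by
    rintro x (rfl | rfl)
    exacts [h0, h1]

def zmodPow (z : G) (hz : z ^ n = 1) (i : ZMod n) : G :=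
  (ZMod.lift n ⟨zmultiplesHom (Additive G) (Additive.ofMul z), by
    rw [zmultiplesHom_apply, natCast_zsmul, ← ofMul_pow, hz, ofMul_one]⟩ i).toMul

section zmodPow

variable {z : G} (hz : z ^ n = 1)

theorem zmodPow_intCast (k : ℤ) : zmodPow z hz k = z ^ k := by
  simp [zmodPow, ZMod.lift_coe]

theorem zmodPow_zero : zmodPow z hz 0 = 1 := by
  simpa using zmodPow_intCast hz 0

theorem zmodPow_one : zmodPow z hz 1 = z := by
  simpa using zmodPow_intCast hz 1

theorem zmodPow_add (i j : ZMod n) :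
    zmodPow z hz (i + j) = zmodPow z hz i * zmodPow z hz j := by
  simp [zmodPow, toMul_add]

theorem zmodPow_mul_of_conj_eq_inv {a : G} (ha : a⁻¹ * z * a = z⁻¹) (i : ZMod n) :
    zmodPow z hz i * a = a * zmodPow z hz (-i) := by
  obtain ⟨k, rfl⟩ := ZMod.intCast_surjective i
  have hk : a⁻¹ * z ^ k * a = z ^ (-k) := by
    simpa [ha] using (conj_zpow (a := a⁻¹) (b := z) (i := k)).symm
  rw [← Int.cast_neg, zmodPow_intCast, zmodPow_intCast, ← hk]
  group

end zmodPow

/-- The universal property of the Coxeter presentation `⟨s, t | s², t², (st)ⁿ⟩` of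
`DihedralGroup n`, with `s = sr 0` and `t = sr 1`. -/
def lift (a b : G) (ha : a * a = 1) (hb : b * b = 1) (hab : (a * b) ^ n = 1) :
    DihedralGroup n →* G where
  toFun
    | r i => zmodPow (a * b) hab i
    | sr i => a * zmodPow (a * b) hab i
  map_one' := zmodPow_zero hab
  map_mul' := by
    have hconj : a⁻¹ * (a * b) * a = (a * b)⁻¹ := by
      rw [inv_mul_cancel_left, _root_.mul_inv_rev, inv_eq_of_mul_eq_one_left ha,
        inv_eq_of_mul_eq_one_left hb]
    have hswap := zmodPow_mul_of_conj_eq_inv hab hconj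
    rintro (i | i) (j | j)
    · simp only [r_mul_r, zmodPow_add]
    · simp only [r_mul_sr, sub_eq_neg_add, zmodPow_add]
      rw [← mul_assoc (zmodPow _ _ i), hswap, mul_assoc]
    · simp only [sr_mul_r, zmodPow_add, mul_assoc]
    · simp only [sr_mul_sr, sub_eq_neg_add, zmodPow_add]
      rw [mul_assoc, ← mul_assoc _ a, hswap, ← mul_assoc, ← mul_assoc, ha, one_mul]

section lift

variable {a b : G} (ha : a * a = 1) (hb : b * b = 1) (hab : (a * b) ^ n = 1)

@[simp]
theorem lift_sr_zero : lift a b ha hb hab (sr 0) = a :=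
  (congrArg (a * ·) (zmodPow_zero hab)).trans (mul_one a)

@[simp]
theorem lift_sr_one : lift a b ha hb hab (sr 1) = b := by
  show a * zmodPow (a * b) hab 1 = b
  rw [zmodPow_one, ← mul_assoc, ha, one_mul]

theorem lift_r_natCast (k : ℕ) : lift a b ha hb hab (r k) = (a * b) ^ k := by
  change zmodPow (a * b) hab (k : ZMod n) = _
  rw [← Int.cast_natCast, zmodPow_intCast, zpow_natCast]

end lift

open scoped commutatorElement in
theorem eq_r_two_or_exists_commutatorElement_eq_r_two :
    ∀ g : DihedralGroup 4, g ≠ 1 → g = r 2 ∨ ∃ h, ⁅g, h⁆ = (r 2 : DihedralGroup 4) := by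
  decide

/-- Every nontrivial normal subgroup of `DihedralGroup 4` contains its centre `{1, r 2}`. -/
theorem injective_of_map_r_two_ne_one {f : DihedralGroup 4 →* G} (hf : f (r 2) ≠ 1) :
    Function.Injective f := by
  open scoped commutatorElement in
  refine (injective_iff_map_eq_one f).2 fun g hg => ?_
  by_contra hne
  obtain rfl | ⟨h, hgh⟩ := eq_r_two_or_exists_commutatorElement_eq_r_two g hne
  · exact hf hg
  · rw [← hgh, map_commutatorElement, hg, commutatorElement_one_left] at hf
    exact hf rfl

end DihedralGroup

open DihedralGroup

section G2

local notation "P" i => (PresentedGroup.of i : PresentedGroup g2Rels)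

theorem g2_of_zero_mul_self : (P 0) * (P 0) = 1 := by
  have h := PresentedGroup.one_of_mem (rels := g2Rels) (x := FreeGroup.of 0 ^ 2) (Or.inl rfl)
  rwa [map_pow, sq] at h

theorem g2_of_one_mul_self : (P 1) * (P 1) = 1 := by
  have h := PresentedGroup.one_of_mem (rels := g2Rels) (x := FreeGroup.of 1 ^ 2)
    (Or.inr (Or.inl rfl))
  rwa [map_pow, sq] at h

theorem g2_of_two_mul_self : (P 2) * (P 2) = 1 := by
  have h := PresentedGroup.one_of_mem (rels := g2Rels) (x := FreeGroup.of 2 ^ 2)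
    (Or.inr (Or.inr (Or.inl rfl)))
  rwa [map_pow, sq] at h

theorem g2_of_zero_mul_of_one_sq : ((P 0) * (P 1)) ^ 2 = P 2 := by
  have h := PresentedGroup.one_of_mem (rels := g2Rels)
    (x := FreeGroup.of 2 * (FreeGroup.of 0 * FreeGroup.of 1) ^ 2)
    (Or.inr (Or.inr (Or.inr (Or.inr (Or.inr rfl)))))
  change (P 2) * ((P 0) * (P 1)) ^ 2 = 1 at h
  rw [eq_inv_of_mul_eq_one_right h, inv_eq_of_mul_eq_one_right g2_of_two_mul_self]

theorem g2_of_zero_mul_of_one_pow_four : ((P 0) * (P 1)) ^ 4 = 1 := by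
  rw [show 4 = 2 * 2 from rfl, pow_mul, g2_of_zero_mul_of_one_sq, sq, g2_of_two_mul_self]

def g2ToDihedral : PresentedGroup g2Rels →* DihedralGroup 4 :=
  PresentedGroup.toGroup (f := ![sr 0, sr 1, r 2]) <| by
    rintro w (rfl | rfl | rfl | rfl | rfl | rfl) <;>
      simp only [map_mul, map_pow, map_inv, FreeGroup.lift_apply_of] <;> decide

def dihedralToG2 : DihedralGroup 4 →* PresentedGroup g2Rels :=
  DihedralGroup.lift (P 0) (P 1) g2_of_zero_mul_self g2_of_one_mul_self
    g2_of_zero_mul_of_one_pow_four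

def g2EquivDihedral : PresentedGroup g2Rels ≃* DihedralGroup 4 :=
  g2ToDihedral.toMulEquiv dihedralToG2
    (PresentedGroup.ext fun i => by
      fin_cases i
      · exact lift_sr_zero g2_of_zero_mul_self g2_of_one_mul_self _
      · exact lift_sr_one g2_of_zero_mul_self g2_of_one_mul_self _
      · change dihedralToG2 (r ((2 : ℕ) : ZMod 4)) = P 2
        rw [dihedralToG2, lift_r_natCast, g2_of_zero_mul_of_one_sq])
    (DihedralGroup.hom_ext (by simp [dihedralToG2, g2ToDihedral])
      (by simp [dihedralToG2, g2ToDihedral]))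

end G2

noncomputable section Pauli

theorem sigmaX_mul_self : sigmaX * sigmaX = 1 := by
  simp [sigmaX, one_fin_two]

theorem sigmaY_mul_self : sigmaY * sigmaY = 1 := by
  simp [sigmaY, one_fin_two]

theorem sigmaX_mul_sigmaY_sq : (sigmaX * sigmaY) ^ 2 = -1 := by
  simp [sq, sigmaX, sigmaY, one_fin_two]

theorem sigmaX_mul_sigmaY_pow_four : (sigmaX * sigmaY) ^ 4 = 1 := by
  rw [show 4 = 2 * 2 from rfl, pow_mul, sigmaX_mul_sigmaY_sq, neg_one_sq]

theorem sigmaX_mul_sigmaY_sq_ne_one : (sigmaX * sigmaY) ^ 2 ≠ 1 := by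
  rw [sigmaX_mul_sigmaY_sq]
  intro h
  have h00 := congrFun (congrFun h 0) 0
  norm_num at h00

def sigmaXUnit : (Matrix (Fin 2) (Fin 2) ℂ)ˣ := ⟨sigmaX, sigmaX, sigmaX_mul_self, sigmaX_mul_self⟩

def sigmaYUnit : (Matrix (Fin 2) (Fin 2) ℂ)ˣ := ⟨sigmaY, sigmaY, sigmaY_mul_self, sigmaY_mul_self⟩

def pauliUnitRep : DihedralGroup 4 →* (Matrix (Fin 2) (Fin 2) ℂ)ˣ :=
  DihedralGroup.lift sigmaXUnit sigmaYUnit (Units.ext sigmaX_mul_self)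
    (Units.ext sigmaY_mul_self)
    (Units.ext ((Units.val_pow_eq_pow_val _ _).trans sigmaX_mul_sigmaY_pow_four))

def pauliRep : DihedralGroup 4 →* Matrix (Fin 2) (Fin 2) ℂ :=
  (Units.coeHom _).comp pauliUnitRep

theorem pauliRep_injective : Function.Injective pauliRep := by
  refine Units.val_injective.comp (injective_of_map_r_two_ne_one fun h => ?_)
  have h2 : pauliUnitRep (r ((2 : ℕ) : ZMod 4)) = 1 := h
  rw [pauliUnitRep, lift_r_natCast] at h2
  exact sigmaX_mul_sigmaY_sq_ne_one
    ((Units.val_pow_eq_pow_val _ _).symm.trans (congrArg Units.val h2))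

theorem map_top_pauliRep :
    (⊤ : Submonoid (DihedralGroup 4)).map pauliRep = Submonoid.closure {sigmaX, sigmaY} := by
  rw [← mclosure_sr_zero_sr_one, MonoidHom.map_mclosure, Set.image_pair]
  simp [pauliRep, pauliUnitRep, sigmaXUnit, sigmaYUnit]

def pauliClosureEquivDihedral :
    Submonoid.closure {sigmaX, sigmaY} ≃* DihedralGroup 4 :=
  ((Submonoid.topEquiv.symm.trans
    (Submonoid.equivMapOfInjective ⊤ pauliRep pauliRep_injective)).trans
      (MulEquiv.submonoidCongr map_top_pauliRep)).symm

end Pauli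

theorem stmt_9 :
    Nonempty ((Submonoid.closure {sigmaX, sigmaY} : Submonoid (Matrix (Fin 2) (Fin 2) ℂ))
        ≃* PresentedGroup g2Rels) ∧
      Nonempty (PresentedGroup g2Rels ≃* DihedralGroup 4) :=
  ⟨⟨pauliClosureEquivDihedral.trans g2EquivDihedral.symm⟩, ⟨g2EquivDihedral⟩⟩
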